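/- There exists a unique continuous function u: [0,1] → ℝ³ with u(0) = (1,0,0), u(1) = (0,1,0), u(t/2) = M_0·u(t) and u((t+1)/2) = M_1·u(t) for all t ∈ [0,1]. -/

import Mathlib

noncomputable def M0 : Matrix (Fin 3) (Fin 3) ℝ :=
  (1/5 : ℝ) • !![5, 2, 2; 0, 2, 1; 0, 1, 2]

noncomputable def M1 : Matrix (Fin 3) (Fin 3) ℝ :=
  (1/5 : ℝ) • !![2, 0, 1; 2, 5, 2; 1, 0, 2]

/-- `u` is a continuous function on `[0,1]` satisfying the boundary conditions
and the self-similarity relations. -/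
def IsHarmonicSide (u : ℝ → (Fin 3 → ℝ)) : Prop :=
  ContinuousOn u (Set.Icc 0 1) ∧
  u 0 = ![1, 0, 0] ∧ u 1 = ![0, 1, 0] ∧
  (∀ t ∈ Set.Icc (0:ℝ) 1, u (t / 2) = M0.mulVec (u t)) ∧
  (∀ t ∈ Set.Icc (0:ℝ) 1, u ((t + 1) / 2) = M1.mulVec (u t))

/-!
`M0` and `M1` have column sums 1, so they preserve the plane `∑ i, v i = 1`, and on vectors with
coordinate sum 0 they shrink the sup norm by the factor `3/5`. Hence they restrict to
contractions `F₀, F₁` of that plane, with fixed points `e₀` and `e₁`, and `F₀ e₁ = F₁ e₀`.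

Existence is de Rham's construction: on bounded continuous curves from `e₀` to `e₁`, the map
`f ↦ (t ↦ F₀ (f (2t)) for t ≤ 1/2, F₁ (f (2t - 1)) otherwise)` is well defined thanks to
`F₀ e₁ = F₁ e₀` and is a `3/5`-contraction; its Banach fixed point is the curve.

Uniqueness: the coordinate sum `s` of a solution satisfies `s t = s (t / 2^n) → s 0 = 1`, so two
solutions take values in the plane, and the distance between them at a point where it is
maximal is at most `3/5` of itself.
-/

open Set Filter Topology

theorem eq_apply_zero_of_apply_half_eq {X : Type*} [TopologicalSpace X] [T2Space X] {s : ℝ → X}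
    (hs : ContinuousOn s (Icc 0 1)) (h : ∀ t ∈ Icc (0 : ℝ) 1, s (t / 2) = s t) :
    ∀ t ∈ Icc (0 : ℝ) 1, s t = s 0 := by
  intro t ht
  have hmem : ∀ n : ℕ, t / 2 ^ n ∈ Icc (0 : ℝ) 1 := fun n =>
    ⟨by have := ht.1; positivity,
      div_le_one_of_le₀ (ht.2.trans (one_le_pow₀ one_le_two)) (by positivity)⟩
  have hconst : ∀ n : ℕ, s (t / 2 ^ n) = s t := by
    intro n
    induction n with
    | zero => simp
    | succ n ih => rw [pow_succ, ← div_div, h _ (hmem n), ih]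
  have hlim : Tendsto (fun n : ℕ => t / 2 ^ n) atTop (𝓝[Icc 0 1] 0) :=
    tendsto_nhdsWithin_iff.2
      ⟨tendsto_const_nhds.div_atTop (tendsto_pow_atTop_atTop_of_one_lt one_lt_two),
        .of_forall hmem⟩
  refine tendsto_nhds_unique ?_ ((hs 0 (left_mem_Icc.2 zero_le_one)).tendsto.comp hlim)
  simp only [Function.comp_def, hconst, tendsto_const_nhds]

theorem nonpos_of_le_mul_on_halves {d : ℝ → ℝ} {K : ℝ} (hd : ContinuousOn d (Icc 0 1))
    (hK₀ : 0 ≤ K) (hK : K < 1) (h₀ : ∀ t ∈ Icc (0 : ℝ) 1, d (t / 2) ≤ K * d t)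
    (h₁ : ∀ t ∈ Icc (0 : ℝ) 1, d ((t + 1) / 2) ≤ K * d t) :
    ∀ t ∈ Icc (0 : ℝ) 1, d t ≤ 0 := by
  obtain ⟨s, hs, hmax⟩ := isCompact_Icc.exists_isMaxOn (nonempty_Icc.2 zero_le_one) hd
  have hself : d s ≤ K * d s := by
    rcases le_total s (1 / 2) with hs' | hs'
    · have := h₀ (2 * s) ⟨by linarith [hs.1], by linarith⟩
      rw [mul_div_cancel_left₀ s two_ne_zero] at this
      exact this.trans (mul_le_mul_of_nonneg_left (hmax ⟨by linarith [hs.1], by linarith⟩) hK₀)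
    · have := h₁ (2 * s - 1) ⟨by linarith, by linarith [hs.2]⟩
      rw [show (2 * s - 1 + 1) / 2 = s by ring] at this
      exact this.trans (mul_le_mul_of_nonneg_left (hmax ⟨by linarith, by linarith [hs.2]⟩) hK₀)
  have hs₀ : d s ≤ 0 := by nlinarith
  exact fun t ht => (hmax ht).trans hs₀

open BoundedContinuousFunction

section DeRham

variable {X : Type*} [MetricSpace X]

noncomputable def glueHalves (F₀ F₁ : X → X) (f : ℝ → X) (t : ℝ) : X :=
  if t ≤ 1 / 2 then F₀ (f (2 * t)) else F₁ (f (2 * t - 1))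

theorem continuous_glueHalves {F₀ F₁ : X → X} {f : ℝ → X} (hF₀ : Continuous F₀)
    (hF₁ : Continuous F₁) (hf : Continuous f) (hmatch : F₀ (f 1) = F₁ (f 0)) :
    Continuous (glueHalves F₀ F₁ f) :=
  Continuous.if_le (by fun_prop) (by fun_prop) continuous_id continuous_const fun t ht => by
    simp [ht, hmatch]

theorem isBounded_range_glueHalves {F₀ F₁ : X → X} {K₀ K₁ : NNReal} {f : ℝ → X}
    (hF₀ : LipschitzWith K₀ F₀) (hF₁ : LipschitzWith K₁ F₁) (hf : Bornology.IsBounded (range f)) :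
    Bornology.IsBounded (range (glueHalves F₀ F₁ f)) := by
  refine ((hF₀.isBounded_image hf).union (hF₁.isBounded_image hf)).subset ?_
  rintro _ ⟨t, rfl⟩
  unfold glueHalves
  split_ifs
  · exact Or.inl (mem_image_of_mem F₀ (mem_range_self _))
  · exact Or.inr (mem_image_of_mem F₁ (mem_range_self _))

theorem dist_glueHalves_le {F₀ F₁ : X → X} {K : NNReal} {f g : ℝ → X} {D : ℝ}
    (hF₀ : LipschitzWith K F₀) (hF₁ : LipschitzWith K F₁) (hfg : ∀ s, dist (f s) (g s) ≤ D)
    (t : ℝ) : dist (glueHalves F₀ F₁ f t) (glueHalves F₀ F₁ g t) ≤ K * D := by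
  unfold glueHalves
  split_ifs
  · exact (hF₀.dist_le_mul _ _).trans (by gcongr; exact hfg _)
  · exact (hF₁.dist_le_mul _ _).trans (by gcongr; exact hfg _)

/-- Curves are parametrised by all of `ℝ` so that the complete space `ℝ →ᵇ X` can be used;
only their values on `[0, 1]` matter. -/
def pinnedCurves (p q : X) : Set (ℝ →ᵇ X) := {f | f 0 = p ∧ f 1 = q}

theorem isClosed_pinnedCurves (p q : X) : IsClosed (pinnedCurves p q) :=
  (isClosed_eq ((continuous_apply 0).comp continuous_coe) continuous_const).inter
    (isClosed_eq ((continuous_apply 1).comp continuous_coe) continuous_const)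

theorem Joined.nonempty_pinnedCurves {p q : X} (h : Joined p q) : (pinnedCurves p q).Nonempty := by
  let γ := h.somePath
  have hbdd : Bornology.IsBounded (range γ.extend) := by
    rw [γ.extend_range]; exact (isCompact_range γ.continuous).isBounded
  exact ⟨⟨⟨γ.extend, γ.continuous_extend⟩, Metric.isBounded_range_iff.1 hbdd⟩,
    γ.extend_zero, γ.extend_one⟩

variable {K : NNReal} {F₀ F₁ : X → X} {p q : X}

noncomputable def deRhamMap (hF₀ : ContractingWith K F₀) (hF₁ : ContractingWith K F₁)
    (hp : F₀ p = p) (hq : F₁ q = q) (hpq : F₀ q = F₁ p) (f : pinnedCurves p q) : pinnedCurves p q :=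
  ⟨⟨⟨glueHalves F₀ F₁ f, continuous_glueHalves hF₀.2.continuous hF₁.2.continuous
      f.1.continuous (by rw [f.2.1, f.2.2, hpq])⟩,
    Metric.isBounded_range_iff.1 (isBounded_range_glueHalves hF₀.2 hF₁.2 f.1.isBounded_range)⟩,
    by simp [glueHalves, f.2.1, hp], by norm_num [glueHalves, f.2.2, hq]⟩

theorem contractingWith_deRhamMap (hF₀ : ContractingWith K F₀) (hF₁ : ContractingWith K F₁)
    (hp : F₀ p = p) (hq : F₁ q = q) (hpq : F₀ q = F₁ p) :
    ContractingWith K (deRhamMap hF₀ hF₁ hp hq hpq) :=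
  ⟨hF₀.1, LipschitzWith.of_dist_le_mul fun f g =>
    (BoundedContinuousFunction.dist_le (by positivity)).2 <|
      dist_glueHalves_le hF₀.2 hF₁.2 fun _ => f.1.dist_coe_le_dist _⟩

theorem exists_deRham_curve [CompleteSpace X] (hF₀ : ContractingWith K F₀)
    (hF₁ : ContractingWith K F₁) (hp : F₀ p = p) (hq : F₁ q = q) (hpq : F₀ q = F₁ p)
    (hjoin : Joined p q) :
    ∃ u : ℝ → X, Continuous u ∧ u 0 = p ∧ u 1 = q ∧
      (∀ t ∈ Icc (0 : ℝ) 1, u (t / 2) = F₀ (u t)) ∧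
      (∀ t ∈ Icc (0 : ℝ) 1, u ((t + 1) / 2) = F₁ (u t)) := by
  have := (isClosed_pinnedCurves p q).completeSpace_coe
  have := hjoin.nonempty_pinnedCurves.to_subtype
  set T := deRhamMap hF₀ hF₁ hp hq hpq
  have hT := contractingWith_deRhamMap hF₀ hF₁ hp hq hpq
  set u := ContractingWith.fixedPoint T hT
  have hu : ∀ t, u.1 t = glueHalves F₀ F₁ u.1 t := fun t =>
    congrArg (fun f : pinnedCurves p q => f.1 t) (ContractingWith.fixedPoint_isFixedPt hT).symm
  refine ⟨u.1, u.1.continuous, u.2.1, u.2.2, fun t ht => ?_, fun t ht => ?_⟩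
  · rw [hu, glueHalves, if_pos (by linarith [ht.2]), mul_div_cancel₀ t two_ne_zero]
  · rcases ht.1.eq_or_lt with rfl | ht₀
    · rw [hu, glueHalves, if_pos (by norm_num)]
      norm_num [u.2.1, u.2.2, hpq]
    · rw [hu, glueHalves, if_neg (by linarith), show 2 * ((t + 1) / 2) - 1 = t by ring]

end DeRham

open Matrix

section UnitSumPlane

variable {n : Type*} [Fintype n]

variable (n) in
def unitSumPlane : Set (n → ℝ) := {v | ∑ i, v i = 1}

theorem isClosed_unitSumPlane : IsClosed (unitSumPlane n) :=
  isClosed_eq (continuous_finsetSum _ fun i _ => continuous_apply i) continuous_const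

theorem convex_unitSumPlane : Convex ℝ (unitSumPlane n) :=
  convex_hyperplane ⟨fun _ _ => Finset.sum_add_distrib, fun _ _ => (Finset.mul_sum _ _ _).symm⟩ 1

theorem dist_mulVec_le_of_sum_eq {M : Matrix n n ℝ} {K : ℝ}
    (hM : ∀ w : n → ℝ, ∑ i, w i = 0 → ‖M *ᵥ w‖ ≤ K * ‖w‖) {v w : n → ℝ}
    (h : ∑ i, v i = ∑ i, w i) : dist (M *ᵥ v) (M *ᵥ w) ≤ K * dist v w := by
  rw [dist_eq_norm, dist_eq_norm, ← mulVec_sub]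
  exact hM _ (by simp [Finset.sum_sub_distrib, h])

theorem contractingWith_mapsTo_restrict {M : Matrix n n ℝ} {K : NNReal}
    (hP : MapsTo (M *ᵥ ·) (unitSumPlane n) (unitSumPlane n)) (hK : K < 1)
    (hM : ∀ w : n → ℝ, ∑ i, w i = 0 → ‖M *ᵥ w‖ ≤ K * ‖w‖) :
    ContractingWith K (hP.restrict _ _ _) :=
  ⟨hK, LipschitzWith.of_dist_le_mul fun v w =>
    dist_mulVec_le_of_sum_eq hM (v.2.trans w.2.symm)⟩

end UnitSumPlane

theorem M0_mulVec (v : Fin 3 → ℝ) :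
    M0 *ᵥ v = ![v 0 + 2/5 * v 1 + 2/5 * v 2, 2/5 * v 1 + 1/5 * v 2, 1/5 * v 1 + 2/5 * v 2] := by
  ext i; fin_cases i <;>
    simp [M0, mulVec, dotProduct, Fin.sum_univ_three, -mul_eq_mul_right_iff,
      -mul_eq_mul_left_iff] <;>
    ring

theorem M1_mulVec (v : Fin 3 → ℝ) :
    M1 *ᵥ v = ![2/5 * v 0 + 1/5 * v 2, 2/5 * v 0 + v 1 + 2/5 * v 2, 1/5 * v 0 + 2/5 * v 2] := by
  ext i; fin_cases i <;>
    simp [M1, mulVec, dotProduct, Fin.sum_univ_three, -mul_eq_mul_right_iff,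
      -mul_eq_mul_left_iff] <;>
    ring

theorem sum_M0_mulVec (v : Fin 3 → ℝ) : ∑ i, (M0 *ᵥ v) i = ∑ i, v i := by
  simp [M0_mulVec, Fin.sum_univ_three]; ring

theorem sum_M1_mulVec (v : Fin 3 → ℝ) : ∑ i, (M1 *ᵥ v) i = ∑ i, v i := by
  simp [M1_mulVec, Fin.sum_univ_three]; ring

theorem norm_M0_mulVec_le {w : Fin 3 → ℝ} (hw : ∑ i, w i = 0) : ‖M0 *ᵥ w‖ ≤ 3/5 * ‖w‖ := by
  have hb : ∀ i, -‖w‖ ≤ w i ∧ w i ≤ ‖w‖ := fun i => abs_le.1 (norm_le_pi_norm w i)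
  obtain ⟨l₀, u₀⟩ := hb 0
  obtain ⟨l₁, u₁⟩ := hb 1
  obtain ⟨l₂, u₂⟩ := hb 2
  rw [Fin.sum_univ_three] at hw
  refine (pi_norm_le_iff_of_nonneg (by positivity)).2 fun i => ?_
  rw [Real.norm_eq_abs, abs_le]
  fin_cases i <;> simp [M0_mulVec] <;> constructor <;> linarith

theorem norm_M1_mulVec_le {w : Fin 3 → ℝ} (hw : ∑ i, w i = 0) : ‖M1 *ᵥ w‖ ≤ 3/5 * ‖w‖ := by
  have hb : ∀ i, -‖w‖ ≤ w i ∧ w i ≤ ‖w‖ := fun i => abs_le.1 (norm_le_pi_norm w i)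
  obtain ⟨l₀, u₀⟩ := hb 0
  obtain ⟨l₁, u₁⟩ := hb 1
  obtain ⟨l₂, u₂⟩ := hb 2
  rw [Fin.sum_univ_three] at hw
  refine (pi_norm_le_iff_of_nonneg (by positivity)).2 fun i => ?_
  rw [Real.norm_eq_abs, abs_le]
  fin_cases i <;> simp [M1_mulVec] <;> constructor <;> linarith

theorem M0_mulVec_e0 : M0 *ᵥ ![1, 0, 0] = ![1, 0, 0] := by simp [M0_mulVec]

theorem M1_mulVec_e1 : M1 *ᵥ ![0, 1, 0] = ![0, 1, 0] := by simp [M1_mulVec]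

theorem M0_mulVec_e1_eq_M1_mulVec_e0 : M0 *ᵥ ![0, 1, 0] = M1 *ᵥ ![1, 0, 0] := by
  simp [M0_mulVec, M1_mulVec]

theorem IsHarmonicSide.sum_eq_one {u : ℝ → Fin 3 → ℝ} (hu : IsHarmonicSide u) :
    ∀ t ∈ Icc (0 : ℝ) 1, ∑ i, u t i = 1 := by
  obtain ⟨hc, h0, -, hrel₀, -⟩ := hu
  have hsum := eq_apply_zero_of_apply_half_eq (s := fun t => ∑ i, u t i)
    (continuousOn_finsetSum _ fun i _ => (continuous_apply i).comp_continuousOn hc)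
    fun t ht => by simp only [hrel₀ t ht, sum_M0_mulVec]
  intro t ht
  rw [hsum t ht, h0, Fin.sum_univ_three]
  simp

theorem IsHarmonicSide.eqOn {u v : ℝ → Fin 3 → ℝ} (hu : IsHarmonicSide u)
    (hv : IsHarmonicSide v) : EqOn u v (Icc 0 1) := by
  have hsum : ∀ t ∈ Icc (0 : ℝ) 1, ∑ i, u t i = ∑ i, v t i := fun t ht => by
    rw [hu.sum_eq_one t ht, hv.sum_eq_one t ht]
  obtain ⟨hcu, -, -, hu₀, hu₁⟩ := hu
  obtain ⟨hcv, -, -, hv₀, hv₁⟩ := hv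
  have hdist := nonpos_of_le_mul_on_halves (d := fun t => dist (u t) (v t)) (K := 3 / 5)
    (continuous_dist.comp_continuousOn (hcu.prodMk hcv)) (by norm_num) (by norm_num)
    (fun t ht => by
      simp only [hu₀ t ht, hv₀ t ht]
      exact dist_mulVec_le_of_sum_eq (fun _ => norm_M0_mulVec_le) (hsum t ht))
    (fun t ht => by
      simp only [hu₁ t ht, hv₁ t ht]
      exact dist_mulVec_le_of_sum_eq (fun _ => norm_M1_mulVec_le) (hsum t ht))
  exact fun t ht => dist_le_zero.1 (hdist t ht)

theorem exists_isHarmonicSide : ∃ u, IsHarmonicSide u := by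
  have : CompleteSpace (unitSumPlane (Fin 3)) := isClosed_unitSumPlane.completeSpace_coe
  have hmaps₀ : MapsTo (M0 *ᵥ ·) (unitSumPlane (Fin 3)) (unitSumPlane (Fin 3)) := fun v hv => by
    simpa [unitSumPlane, sum_M0_mulVec] using hv
  have hmaps₁ : MapsTo (M1 *ᵥ ·) (unitSumPlane (Fin 3)) (unitSumPlane (Fin 3)) := fun v hv => by
    simpa [unitSumPlane, sum_M1_mulVec] using hv
  let p : unitSumPlane (Fin 3) := ⟨![1, 0, 0], by simp [unitSumPlane, Fin.sum_univ_three]⟩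
  let q : unitSumPlane (Fin 3) := ⟨![0, 1, 0], by simp [unitSumPlane, Fin.sum_univ_three]⟩
  have hp : hmaps₀.restrict _ _ _ p = p := Subtype.ext M0_mulVec_e0
  have hq : hmaps₁.restrict _ _ _ q = q := Subtype.ext M1_mulVec_e1
  have hpq : hmaps₀.restrict _ _ _ q = hmaps₁.restrict _ _ _ p :=
    Subtype.ext M0_mulVec_e1_eq_M1_mulVec_e0
  have hjoin : Joined p q :=
    ((convex_unitSumPlane.isPathConnected ⟨_, p.2⟩).joinedIn _ p.2 _ q.2).joined_subtype
  obtain ⟨u, hc, h0, h1, hrel₀, hrel₁⟩ := exists_deRham_curve (K := 3 / 5)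
    (contractingWith_mapsTo_restrict hmaps₀ (by norm_num) fun _ hw => by
      simpa using norm_M0_mulVec_le hw)
    (contractingWith_mapsTo_restrict hmaps₁ (by norm_num) fun _ hw => by
      simpa using norm_M1_mulVec_le hw)
    hp hq hpq hjoin
  exact ⟨fun t => u t, (continuous_subtype_val.comp hc).continuousOn, congrArg Subtype.val h0,
    congrArg Subtype.val h1, fun t ht => congrArg Subtype.val (hrel₀ t ht),
    fun t ht => congrArg Subtype.val (hrel₁ t ht)⟩

/-- Existence and uniqueness (as a function on `[0,1]`). -/
theorem stmt_17 :
    ∃ u : ℝ → (Fin 3 → ℝ), IsHarmonicSide u ∧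
      ∀ v : ℝ → (Fin 3 → ℝ), IsHarmonicSide v →
        Set.EqOn v u (Set.Icc 0 1) := by
  obtain ⟨u, hu⟩ := exists_isHarmonicSide
  exact ⟨u, hu, fun v hv => hv.eqOn hu⟩
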